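/- arXiv:0909.3738 — 5 statements merged into one kernel-verified Lean document; each statement's English description precedes it below -/
import Mathlib

section
/- If m, f, g are non-negative integrable functions on ℝ satisfying m((r+s)/2) ≥ √(f(r)·g(s)) for all r, s ∈ ℝ, then ∫ℝ m ≥ √(∫ℝ f · ∫ℝ g). -/
open MeasureTheory Set Filter Topology
open scoped Pointwise ENNReal

/-!
First the additive form: if `min (f r) (g s) ≤ m ((r + s) / 2)` and `f`, `g` have the
same supremum, then `∫ f + ∫ g ≤ 2 ∫ m`. By the layer-cake formula it suffices to compare
superlevel sets: at every level `t` below the common supremum, `{f > t}` and `{g > t}` are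
nonempty and their midpoint set lies in `{m > t}`, so the one-dimensional Brunn–Minkowski inequality
`|A| + |B| ≤ |A + B|` applies. It holds for arbitrary nonempty sets (outer measure), because
`b + (A ∩ Iic a)` and `a + (B ∩ Ici b)` lie in `A + B` on either side of `a + b`, so no
measurability of the level sets is needed.
For bounded `f`, `g`, replacing `f` by `c * f` with `c = sup g / sup f` equalizes the suprema and
costs only a factor `√c` on `m`; AM–GM turns the additive bound into the multiplicative one. The
general case follows by truncating `f` and `g` at height `n` and letting `n → ∞`.
-/

theorem MeasureTheory.measure_eq_iSup_measure_inter_Iic {α : Type*} [LinearOrder α]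
    [TopologicalSpace α] [OrderTopology α] [SecondCountableTopology α] [MeasurableSpace α]
    (μ : Measure α) [NullSingletonClass μ] (A : Set α) :
    μ A = ⨆ a ∈ A, μ (A ∩ Iic a) := by
  refine le_antisymm ?_ (iSup₂_le fun a _ ↦ measure_mono inter_subset_left)
  obtain ⟨D, hDA, hDc, hAD⟩ :=
    (TopologicalSpace.IsSeparable.of_separableSpace A).exists_countable_dense_subset
  -- A countable dense `D ⊆ A` is cofinal in `A` except at a greatest element, which is null.
  have hcover : A ⊆ (⋃ d ∈ D, A ∩ Iic d) ∪ (A ∩ upperBounds A) := by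
    intro x hx
    by_cases hmax : x ∈ upperBounds A
    · exact Or.inr ⟨hx, hmax⟩
    · obtain ⟨y, hyA, hxy⟩ := not_forall₂.mp hmax
      obtain ⟨d, hd, hdD⟩ := mem_closure_iff.mp (hAD hyA) (Ioi x) isOpen_Ioi (lt_of_not_ge hxy)
      exact Or.inl (mem_biUnion hdD ⟨hx, le_of_lt hd⟩)
  have hmax_null : μ (A ∩ upperBounds A) = 0 :=
    Set.Subsingleton.measure_zero (fun x hx y hy ↦ le_antisymm (hy.2 hx.1) (hx.2 hy.1)) μ
  calc μ A ≤ μ (⋃ d ∈ D, A ∩ Iic d) + μ (A ∩ upperBounds A) :=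
        (measure_mono hcover).trans (measure_union_le _ _)
    _ = μ (⋃ d ∈ D, A ∩ Iic d) := by rw [hmax_null, add_zero]
    _ = ⨆ d ∈ D, μ (A ∩ Iic d) := measure_biUnion_eq_iSup hDc <|
        (Std.Total.directedOn (r := (· ≤ ·)) D).mono fun _ _ h ↦
          inter_subset_inter_right A (Iic_subset_Iic.2 h)
    _ ≤ ⨆ a ∈ A, μ (A ∩ Iic a) := biSup_mono hDA

theorem MeasureTheory.measure_eq_iSup_measure_inter_Ici {α : Type*} [LinearOrder α]
    [TopologicalSpace α] [OrderTopology α] [SecondCountableTopology α] [MeasurableSpace α]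
    (μ : Measure α) [NullSingletonClass μ] (A : Set α) :
    μ A = ⨆ a ∈ A, μ (A ∩ Ici a) :=
  @measure_eq_iSup_measure_inter_Iic αᵒᵈ _ _ _ _ _ μ ‹_› A

theorem Real.volume_add_volume_le_volume_add {A B : Set ℝ} (hA : A.Nonempty) (hB : B.Nonempty) :
    volume A + volume B ≤ volume (A + B) := by
  rw [measure_eq_iSup_measure_inter_Iic volume A, measure_eq_iSup_measure_inter_Ici volume B]
  refine ENNReal.biSup_add_biSup_le hA hB fun a ha b hb ↦ ?_
  have hleft : b +ᵥ (A ∩ Iic a) ⊆ (A + B) ∩ Iic (a + b) := by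
    rintro _ ⟨x, ⟨hxA, hxa⟩, rfl⟩
    simp only [vadd_eq_add, mem_inter_iff, mem_Iic] at hxa ⊢
    exact ⟨add_comm x b ▸ add_mem_add hxA hb, by linarith⟩
  have hright : (a +ᵥ (B ∩ Ici b)) \ {a + b} ⊆ (A + B) \ Iic (a + b) := by
    rintro _ ⟨⟨y, ⟨hyB, hyb⟩, rfl⟩, hne⟩
    refine ⟨add_mem_add ha hyB, fun hle ↦ hne ?_⟩
    simp only [vadd_eq_add, mem_Iic, mem_Ici, mem_singleton_iff] at hle hyb ⊢
    linarith
  calc volume (A ∩ Iic a) + volume (B ∩ Ici b)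
      = volume (b +ᵥ (A ∩ Iic a)) + volume ((a +ᵥ (B ∩ Ici b)) \ {a + b}) := by
        rw [measure_sdiff_null (measure_singleton _), measure_vadd, measure_vadd]
    _ ≤ volume ((A + B) ∩ Iic (a + b)) + volume ((A + B) \ Iic (a + b)) :=
        add_le_add (measure_mono hleft) (measure_mono hright)
    _ = volume (A + B) := measure_inter_add_sdiff _ measurableSet_Iic

theorem Real.volume_add_volume_le_two_mul_volume_of_midpoint_mem {A B M : Set ℝ}
    (hA : A.Nonempty) (hB : B.Nonempty) (hmid : ∀ x ∈ A, ∀ y ∈ B, (x + y) / 2 ∈ M) :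
    volume A + volume B ≤ 2 * volume M := by
  have hsub : (2⁻¹ : ℝ) • (A + B) ⊆ M := by
    rintro _ ⟨_, ⟨x, hx, y, hy, rfl⟩, rfl⟩
    simpa [div_eq_inv_mul] using hmid x hx y hy
  calc volume A + volume B ≤ volume (A + B) := volume_add_volume_le_volume_add hA hB
    _ = 2 * volume ((2⁻¹ : ℝ) • (A + B)) := by
        rw [Measure.addHaar_smul]
        simp [← mul_assoc, ENNReal.ofReal_inv_of_pos, ENNReal.mul_inv_cancel]
    _ ≤ 2 * volume M := by gcongr

theorem volume_setOf_lt_add_volume_setOf_lt_le_of_min_le {f g m : ℝ → ℝ} {K : ℝ}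
    (hf : IsLUB (range f) K) (hg : IsLUB (range g) K)
    (hmin : ∀ r s, min (f r) (g s) ≤ m ((r + s) / 2)) (t : ℝ) :
    volume {x | t < f x} + volume {x | t < g x} ≤ 2 * volume {x | t < m x} := by
  have hlevel : {x | t < f x}.Nonempty ↔ {x | t < g x}.Nonempty := by
    simp only [Set.Nonempty, mem_ofPred_eq, ← exists_range_iff (p := (t < ·)),
      ← lt_isLUB_iff hf, ← lt_isLUB_iff hg]
  rcases {x | t < f x}.eq_empty_or_nonempty with hA | hA
  · rw [hA, not_nonempty_iff_eq_empty.mp (hlevel.not.mp (not_nonempty_iff_eq_empty.mpr hA))]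
    simp
  · exact Real.volume_add_volume_le_two_mul_volume_of_midpoint_mem hA (hlevel.mp hA)
      fun x hx y hy ↦ (lt_min hx hy).trans_le (hmin x y)

theorem integral_add_integral_le_two_mul_integral_of_min_le {f g m : ℝ → ℝ} {K : ℝ}
    (hf0 : ∀ x, 0 ≤ f x) (hg0 : ∀ x, 0 ≤ g x)
    (hfi : Integrable f) (hgi : Integrable g) (hmi : Integrable m)
    (hf : IsLUB (range f) K) (hg : IsLUB (range g) K)
    (hmin : ∀ r s, min (f r) (g s) ≤ m ((r + s) / 2)) :
    (∫ x, f x) + ∫ x, g x ≤ 2 * ∫ x, m x := by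
  have hm0 : ∀ z, 0 ≤ m z := fun z ↦ (le_min (hf0 z) (hg0 z)).trans (by simpa using hmin z z)
  have hlevel_meas : Measurable fun t ↦ volume {x | t < f x} :=
    Antitone.measurable fun s t hst ↦ measure_mono fun x hx ↦ hst.trans_lt hx
  have hlint : (∫⁻ x, ENNReal.ofReal (f x)) + ∫⁻ x, ENNReal.ofReal (g x) ≤
      2 * ∫⁻ x, ENNReal.ofReal (m x) := by
    rw [lintegral_eq_lintegral_meas_lt volume (ae_of_all _ hf0) hfi.aemeasurable,
      lintegral_eq_lintegral_meas_lt volume (ae_of_all _ hg0) hgi.aemeasurable,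
      lintegral_eq_lintegral_meas_lt volume (ae_of_all _ hm0) hmi.aemeasurable,
      ← lintegral_add_left hlevel_meas, ← lintegral_const_mul' _ _ ENNReal.ofNat_ne_top]
    exact lintegral_mono fun t ↦ volume_setOf_lt_add_volume_setOf_lt_le_of_min_le hf hg hmin t
  rw [← ofReal_integral_eq_lintegral_ofReal hfi (ae_of_all _ hf0),
    ← ofReal_integral_eq_lintegral_ofReal hgi (ae_of_all _ hg0),
    ← ofReal_integral_eq_lintegral_ofReal hmi (ae_of_all _ hm0),
    ← ENNReal.ofReal_add (integral_nonneg hf0) (integral_nonneg hg0),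
    ← ENNReal.ofReal_ofNat 2, ← ENNReal.ofReal_mul zero_le_two,
    ENNReal.ofReal_le_ofReal_iff (mul_nonneg zero_le_two (integral_nonneg hm0))] at hlint
  exact hlint

theorem Real.sqrt_mul_le_of_mul_add_le {a b c M : ℝ} (ha : 0 ≤ a) (hb : 0 ≤ b) (hc : 0 < c)
    (h : c * a + b ≤ 2 * √c * M) : √(a * b) ≤ M := by
  refine le_of_mul_le_mul_left ?_ (mul_pos two_pos (Real.sqrt_pos.mpr hc))
  calc 2 * √c * √(a * b) = 2 * √(c * a) * √b := by
        rw [Real.sqrt_mul ha, Real.sqrt_mul hc.le]; ring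
    _ ≤ √(c * a) ^ 2 + √b ^ 2 := two_mul_le_add_sq _ _
    _ = c * a + b := by rw [Real.sq_sqrt (mul_nonneg hc.le ha), Real.sq_sqrt hb]
    _ ≤ 2 * √c * M := h

theorem Real.min_le_sqrt_mul {x y : ℝ} (hx : 0 ≤ x) (hy : 0 ≤ y) : min x y ≤ √(x * y) :=
  Real.le_sqrt_of_sq_le (by
    rw [sq]
    exact mul_le_mul (min_le_left _ _) (min_le_right _ _) (le_min hx hy) hx)

theorem sqrt_integral_mul_integral_le_integral_of_bddAbove {f g m : ℝ → ℝ}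
    (hf0 : ∀ x, 0 ≤ f x) (hg0 : ∀ x, 0 ≤ g x)
    (hfi : Integrable f) (hgi : Integrable g) (hmi : Integrable m)
    (hfb : BddAbove (range f)) (hgb : BddAbove (range g))
    (hcond : ∀ r s, √(f r * g s) ≤ m ((r + s) / 2)) :
    √((∫ x, f x) * ∫ x, g x) ≤ ∫ x, m x := by
  have hm0 : ∀ z, 0 ≤ m z := fun z ↦ (Real.sqrt_nonneg _).trans (by simpa using hcond z z)
  by_cases hzero : (∀ x, f x = 0) ∨ ∀ x, g x = 0
  · have : (∫ x, f x) * ∫ x, g x = 0 := by rcases hzero with h | h <;> simp [h]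
    rw [this, Real.sqrt_zero]
    exact integral_nonneg hm0
  push Not at hzero
  obtain ⟨⟨xf, hxf⟩, xg, hxg⟩ := hzero
  have hKf : 0 < ⨆ x, f x := ((hf0 xf).lt_of_ne' hxf).trans_le (le_ciSup hfb xf)
  have hKg : 0 < ⨆ x, g x := ((hg0 xg).lt_of_ne' hxg).trans_le (le_ciSup hgb xg)
  set c := (⨆ x, g x) / ⨆ x, f x
  have hc : 0 < c := div_pos hKg hKf
  have hlub : IsLUB (range fun x ↦ c * f x) (⨆ x, g x) := by
    have := (isLUB_ciSup hfb).mul_left hc.le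
    rwa [← range_comp, div_mul_cancel₀ _ hKf.ne'] at this
  have hadd := integral_add_integral_le_two_mul_integral_of_min_le
    (fun x ↦ mul_nonneg hc.le (hf0 x)) hg0 (hfi.const_mul c) hgi (hmi.const_mul √c)
    hlub (isLUB_ciSup hgb) fun r s ↦
    calc min (c * f r) (g s) ≤ √(c * f r * g s) :=
          Real.min_le_sqrt_mul (mul_nonneg hc.le (hf0 r)) (hg0 s)
      _ = √c * √(f r * g s) := by rw [mul_assoc, Real.sqrt_mul hc.le]
      _ ≤ √c * m ((r + s) / 2) := mul_le_mul_of_nonneg_left (hcond r s) (Real.sqrt_nonneg c)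
  rw [integral_const_mul, integral_const_mul, ← mul_assoc] at hadd
  exact Real.sqrt_mul_le_of_mul_add_le (integral_nonneg hf0) (integral_nonneg hg0) hc hadd

theorem abs_min_le_abs_of_nonneg {a c : ℝ} (hc : 0 ≤ c) : |min a c| ≤ |a| :=
  abs_le.mpr ⟨le_min (neg_abs_le a) ((neg_nonpos.mpr (abs_nonneg a)).trans hc),
    (min_le_left a c).trans (le_abs_self a)⟩

theorem MeasureTheory.Integrable.min_const {α : Type*} [MeasurableSpace α] {μ : Measure α}
    {f : α → ℝ} (hf : Integrable f μ) {c : ℝ} (hc : 0 ≤ c) :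
    Integrable (fun x ↦ min (f x) c) μ :=
  hf.mono (hf.aemeasurable.min aemeasurable_const).aestronglyMeasurable
    (ae_of_all _ fun _ ↦ abs_min_le_abs_of_nonneg hc)

theorem MeasureTheory.tendsto_integral_min_natCast {α : Type*} [MeasurableSpace α]
    {μ : Measure α} {f : α → ℝ} (hf : Integrable f μ) :
    Tendsto (fun n : ℕ ↦ ∫ x, min (f x) n ∂μ) atTop (𝓝 (∫ x, f x ∂μ)) :=
  tendsto_integral_of_dominated_convergence (fun x ↦ ‖f x‖)
    (fun n ↦ (hf.min_const n.cast_nonneg).aestronglyMeasurable) hf.norm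
    (fun n ↦ ae_of_all _ fun _ ↦ abs_min_le_abs_of_nonneg n.cast_nonneg)
    (ae_of_all _ fun x ↦ tendsto_const_nhds.congr' <|
      (tendsto_natCast_atTop_atTop.eventually_ge_atTop (f x)).mono fun _ hn ↦
        (min_eq_left hn).symm)

theorem prekopa_leindler_1d_general
    (m f g : ℝ → ℝ)
    (hf0 : ∀ x, 0 ≤ f x) (hg0 : ∀ x, 0 ≤ g x)
    (hmi : Integrable m) (hfi : Integrable f) (hgi : Integrable g)
    (hcond : ∀ r s : ℝ, Real.sqrt (f r * g s) ≤ m ((r + s) / 2)) :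
    Real.sqrt ((∫ x, f x) * (∫ x, g x)) ≤ ∫ x, m x := by
  have htrunc (n : ℕ) : √((∫ x, min (f x) n) * ∫ x, min (g x) n) ≤ ∫ x, m x :=
    sqrt_integral_mul_integral_le_integral_of_bddAbove
      (fun x ↦ le_min (hf0 x) n.cast_nonneg) (fun x ↦ le_min (hg0 x) n.cast_nonneg)
      (hfi.min_const n.cast_nonneg) (hgi.min_const n.cast_nonneg) hmi
      ⟨n, forall_mem_range.2 fun _ ↦ min_le_right _ _⟩
      ⟨n, forall_mem_range.2 fun _ ↦ min_le_right _ _⟩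
      fun r s ↦ (Real.sqrt_le_sqrt (mul_le_mul (min_le_left _ _) (min_le_left _ _)
        (le_min (hg0 s) n.cast_nonneg) (hf0 r))).trans (hcond r s)
  exact le_of_tendsto
    ((tendsto_integral_min_natCast hfi).mul (tendsto_integral_min_natCast hgi)).sqrt
    (Eventually.of_forall htrunc)

theorem prekopa_leindler_1d
    (m f g : ℝ → ℝ)
    (hm0 : ∀ x, 0 ≤ m x) (hf0 : ∀ x, 0 ≤ f x) (hg0 : ∀ x, 0 ≤ g x)
    (hmi : Integrable m) (hfi : Integrable f) (hgi : Integrable g)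
    (hcond : ∀ r s : ℝ, Real.sqrt (f r * g s) ≤ m ((r + s) / 2)) :
    Real.sqrt ((∫ x, f x) * (∫ x, g x)) ≤ ∫ x, m x :=
  prekopa_leindler_1d_general m f g hf0 hg0 hmi hfi hgi hcond
end

section
/- If h is a log-concave probability density on ℝ with median w, then h(x) ≤ 2 h(w) for every x ∈ ℝ. -/
/-!
Let `a < b` with `h a > h b > 0`, and let `g t = C * exp (m * t)`, `m < 0`, be the exponential
with `g a = h a` and `g b = h b`. Log-concavity puts `h` above `g` on `[a, b]` and below `g` on
`(b, ∞)`. Integrating, `(h a - h b) / |m| ≤ ∫ t in a..b, h t` and `∫ t in Ioi b, h t ≤ h b / |m|`.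
When `b` is a median the first mass is at most `1/2` and the second equals `1/2`, so
`h a - h b ≤ h b`. Points to the right of the median are handled by reflecting `h`.
-/

open MeasureTheory

def LogConcaveFn (h : ℝ → ℝ) : Prop :=
  (∀ x, 0 ≤ h x) ∧
  ∀ x y l : ℝ, 0 < l → l < 1 → h x ^ (1 - l) * h y ^ l ≤ h ((1 - l) * x + l * y)

open Real Set

lemma exists_combo_eq_of_mem_Ioo {a b c : ℝ} (hb : b ∈ Ioo a c) :
    ∃ l, 0 < l ∧ l < 1 ∧ (1 - l) * a + l * c = b := by
  rw [← openSegment_eq_Ioo (hb.1.trans hb.2)] at hb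
  obtain ⟨p, l, hp, hl, hpl, rfl⟩ := hb
  exact ⟨l, hl, by linarith, by rw [← hpl, smul_eq_mul, smul_eq_mul]; ring⟩

lemma mul_exp_rpow_mul_mul_exp_rpow {C : ℝ} (hC : 0 ≤ C) (m a c l : ℝ) :
    (C * exp (m * a)) ^ (1 - l) * (C * exp (m * c)) ^ l =
      C * exp (m * ((1 - l) * a + l * c)) := by
  have hCl : C ^ (1 - l) * C ^ l = C := by
    rw [← rpow_add' hC (by simp), sub_add_cancel, rpow_one]
  rw [mul_rpow hC (exp_pos _).le, mul_rpow hC (exp_pos _).le, ← exp_mul, ← exp_mul,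
    mul_mul_mul_comm, hCl, ← exp_add]
  ring_nf

lemma intervalIntegral_mul_exp (C : ℝ) {m : ℝ} (hm : m ≠ 0) (a b : ℝ) :
    ∫ t in a..b, C * exp (m * t) = (C * exp (m * b) - C * exp (m * a)) / m := by
  rw [intervalIntegral.integral_const_mul,
    intervalIntegral.integral_comp_mul_left (fun t => exp t) hm, integral_exp, smul_eq_mul]
  field_simp

lemma integral_mul_exp_Ioi (C : ℝ) {m : ℝ} (hm : m < 0) (a : ℝ) :
    ∫ t in Ioi a, C * exp (m * t) = -(C * exp (m * a)) / m := by
  rw [integral_const_mul, integral_exp_mul_Ioi hm]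
  ring

namespace LogConcaveFn

variable {h : ℝ → ℝ} {a b c C m : ℝ}

lemma comp_neg (hlc : LogConcaveFn h) : LogConcaveFn fun t => h (-t) := by
  refine ⟨fun t => hlc.1 (-t), fun a c l hl0 hl1 => ?_⟩
  convert hlc.2 (-a) (-c) l hl0 hl1 using 2
  ring

lemma mul_exp_le_of_mem_Ioo (hlc : LogConcaveFn h) (hC : 0 ≤ C)
    (ha : C * exp (m * a) ≤ h a) (hc : C * exp (m * c) ≤ h c) (hb : b ∈ Ioo a c) :
    C * exp (m * b) ≤ h b := by
  obtain ⟨l, hl0, hl1, rfl⟩ := exists_combo_eq_of_mem_Ioo hb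
  calc C * exp (m * ((1 - l) * a + l * c))
      = (C * exp (m * a)) ^ (1 - l) * (C * exp (m * c)) ^ l :=
        (mul_exp_rpow_mul_mul_exp_rpow hC m a c l).symm
    _ ≤ h a ^ (1 - l) * h c ^ l :=
        mul_le_mul (rpow_le_rpow (by positivity) ha (by linarith))
          (rpow_le_rpow (by positivity) hc hl0.le) (by positivity) (rpow_nonneg (hlc.1 a) _)
    _ ≤ h ((1 - l) * a + l * c) := hlc.2 a c l hl0 hl1

lemma le_mul_exp_of_lt (hlc : LogConcaveFn h) (hC : 0 ≤ C) (hab : a < b) (hbc : b < c)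
    (ha₀ : 0 < h a) (ha : C * exp (m * a) ≤ h a) (hb : h b ≤ C * exp (m * b)) :
    h c ≤ C * exp (m * c) := by
  obtain ⟨l, hl0, hl1, rfl⟩ := exists_combo_eq_of_mem_Ioo ⟨hab, hbc⟩
  have key : h a ^ (1 - l) * h c ^ l ≤ h a ^ (1 - l) * (C * exp (m * c)) ^ l :=
    calc h a ^ (1 - l) * h c ^ l ≤ h ((1 - l) * a + l * c) := hlc.2 a c l hl0 hl1
      _ ≤ C * exp (m * ((1 - l) * a + l * c)) := hb
      _ = (C * exp (m * a)) ^ (1 - l) * (C * exp (m * c)) ^ l :=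
        (mul_exp_rpow_mul_mul_exp_rpow hC m a c l).symm
      _ ≤ h a ^ (1 - l) * (C * exp (m * c)) ^ l :=
        mul_le_mul_of_nonneg_right (rpow_le_rpow (by positivity) ha (by linarith))
          (by positivity)
  exact (rpow_le_rpow_iff (hlc.1 c) (by positivity) hl0).1
    (le_of_mul_le_mul_left key (rpow_pos_of_pos ha₀ _))

theorem le_two_mul_of_lt (hlc : LogConcaveFn h) (hab : a < b)
    (hi : IntervalIntegrable h volume a b)
    (hmass : ∫ t in a..b, h t ≤ ∫ t in Ioi b, h t) (hpos : 0 < ∫ t in Ioi b, h t) :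
    h a ≤ 2 * h b := by
  rcases le_or_gt (h a) (h b) with hle | hlt
  · linarith [hlc.1 b]
  have ha : 0 < h a := (hlc.1 b).trans_lt hlt
  have hb : 0 < h b := by
    refine (hlc.1 b).lt_of_ne' fun hb₀ => hpos.not_ge ?_
    refine setIntegral_nonpos measurableSet_Ioi fun t ht => ?_
    -- compare `h` with `g = 0`: it vanishes on `Ioi b`
    simpa using hlc.le_mul_exp_of_lt (C := 0) (m := 0) le_rfl hab ht ha (by simp [ha.le])
      (by simp [hb₀])
  set m := log (h b / h a) / (b - a)
  set C := h b * exp (-(m * b))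
  have hm : m < 0 :=
    div_neg_of_neg_of_pos (log_neg (div_pos hb ha) ((div_lt_one ha).2 hlt)) (sub_pos.2 hab)
  have hgb : C * exp (m * b) = h b := by
    rw [mul_assoc, ← exp_add, neg_add_cancel, exp_zero, mul_one]
  have hga : C * exp (m * a) = h a := by
    have : -(m * b) + m * a = -log (h b / h a) := by
      simp only [m]; field_simp [(sub_pos.2 hab).ne']; ring
    rw [mul_assoc, ← exp_add, this, exp_neg, exp_log (div_pos hb ha)]
    field_simp
  have lower : ∫ t in a..b, C * exp (m * t) ≤ ∫ t in a..b, h t :=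
    intervalIntegral.integral_mono_on_of_le_Ioo hab.le
      (by apply Continuous.intervalIntegrable; fun_prop) hi
      fun t ht => hlc.mul_exp_le_of_mem_Ioo (by positivity) hga.le hgb.le ht
  have upper : ∫ t in Ioi b, h t ≤ ∫ t in Ioi b, C * exp (m * t) :=
    integral_mono_of_nonneg (ae_of_all _ hlc.1) ((integrableOn_exp_mul_Ioi hm b).const_mul C)
      (ae_restrict_of_forall_mem measurableSet_Ioi fun t ht =>
        hlc.le_mul_exp_of_lt (by positivity) hab ht ha hga.le hgb.ge)
  rw [intervalIntegral_mul_exp C hm.ne, hgb, hga] at lower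
  rw [integral_mul_exp_Ioi C hm, hgb] at upper
  have := (div_le_div_right_of_neg hm).1 (lower.trans (hmass.trans upper))
  linarith

theorem le_two_mul_of_gt (hlc : LogConcaveFn h) (hba : b < a)
    (hi : IntervalIntegrable h volume b a)
    (hmass : ∫ t in b..a, h t ≤ ∫ t in Iic b, h t) (hpos : 0 < ∫ t in Iic b, h t) :
    h a ≤ 2 * h b := by
  have hflip : ∫ t in Ioi (-b), h (-t) = ∫ t in Iic b, h t := by
    rw [integral_comp_neg_Ioi, neg_neg]
  simpa using hlc.comp_neg.le_two_mul_of_lt (neg_lt_neg hba)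
    ((IntervalIntegrable.iff_comp_neg (by simp)).1 hi).symm
    (by rwa [intervalIntegral.integral_comp_neg, neg_neg, neg_neg, hflip]) (by rwa [hflip])

end LogConcaveFn

theorem logconcave_max_le_twice_median
    (h : ℝ → ℝ) (hlc : LogConcaveFn h)
    (hi : Integrable h) (h1 : ∫ x, h x = 1)
    (w : ℝ) (hw : ∫ x in Set.Iic w, h x = 1 / 2)
    (x : ℝ) :
    h x ≤ 2 * h w := by
  have hIoi : ∫ t in Ioi w, h t = 1 / 2 := by
    have := intervalIntegral.integral_Iic_add_Ioi (b := w) hi.integrableOn hi.integrableOn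
    linarith
  rcases lt_trichotomy x w with hxw | rfl | hwx
  · refine hlc.le_two_mul_of_lt hxw hi.intervalIntegrable ?_ (by norm_num [hIoi])
    rw [hIoi, ← hw, intervalIntegral.integral_of_le hxw.le]
    exact setIntegral_mono_set hi.integrableOn (ae_of_all _ hlc.1) Ioc_subset_Iic_self.eventuallyLE
  · linarith [hlc.1 x]
  · refine hlc.le_two_mul_of_gt hwx hi.intervalIntegrable ?_ (by norm_num [hw])
    rw [hw, ← hIoi, intervalIntegral.integral_of_le hwx.le]
    exact setIntegral_mono_set hi.integrableOn (ae_of_all _ hlc.1) Ioc_subset_Ioi_self.eventuallyLE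
end

section
/- If h is a log-concave probability density on ℝ with median w and x > w, then ∫ₓ^∞ h ≤ h(x)/(2 h(w)). -/
/-! If `x, y` lie between `a` and `d` and `x + y = a + d`, log-concavity gives
`h a * h d ≤ h x * h y`. Applied to `a ≤ b ≤ t` and `t - (b - a)`, and integrated over `t > b`,
this says that the tail-to-density ratio `(∫ t in Ioi b, h t) / h b` is antitone in `b`
(log-concave densities have monotone hazard rate). At the median `w` the ratio is `1 / (2 * h w)`. -/

open MeasureTheory

theorem setIntegral_Ioi_comp_sub {E : Type*} [NormedAddCommGroup E] [NormedSpace ℝ E]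
    (f : ℝ → E) (b d : ℝ) : ∫ t in Set.Ioi b, f (t - d) = ∫ t in Set.Ioi (b - d), f t := by
  simpa using (measurePreserving_sub_right volume d).setIntegral_preimage_emb
    (measurableEmbedding_subRight d) f (Set.Ioi (b - d))

namespace LogConcaveFn

variable {h : ℝ → ℝ}

theorem rpow_mul_rpow_le (hh : LogConcaveFn h) (x y : ℝ) {l : ℝ} (hl₀ : 0 ≤ l) (hl₁ : l ≤ 1) :
    h x ^ (1 - l) * h y ^ l ≤ h ((1 - l) * x + l * y) := by
  rcases hl₀.eq_or_lt with rfl | hl₀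
  · simp
  rcases hl₁.eq_or_lt with rfl | hl₁
  · simp
  exact hh.2 x y l hl₀ hl₁

theorem mul_le_mul_of_add_eq (hh : LogConcaveFn h) {a d x y : ℝ} (hax : a ≤ x) (hxd : x ≤ d)
    (hsum : x + y = a + d) : h a * h d ≤ h x * h y := by
  rcases hax.eq_or_lt with rfl | hax
  · obtain rfl : y = d := by linarith
    rfl
  have hda : d - a ≠ 0 := by linarith
  set l := (x - a) / (d - a)
  have hl₀ : 0 ≤ l := div_nonneg (by linarith) (by linarith)
  have hl₁ : l ≤ 1 := div_le_one_of_le₀ (by linarith) (by linarith)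
  have hx : (1 - l) * a + l * d = x := by simp only [l]; field_simp; ring
  have hy : (1 - (1 - l)) * a + (1 - l) * d = y := by linarith
  have split : ∀ u, h u = h u ^ (1 - l) * h u ^ l := fun u => by
    rw [← Real.rpow_add' (hh.1 u) (by norm_num), sub_add_cancel, Real.rpow_one]
  calc h a * h d = (h a ^ (1 - l) * h d ^ l) * (h a ^ (1 - (1 - l)) * h d ^ (1 - l)) := by
        rw [sub_sub_cancel, mul_mul_mul_comm, ← split, mul_comm (h d ^ l), ← split]
    _ ≤ h x * h y := by
        rw [← hx, ← hy]
        gcongr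
        · exact mul_nonneg (Real.rpow_nonneg (hh.1 _) _) (Real.rpow_nonneg (hh.1 _) _)
        · exact hh.1 _
        · exact hh.rpow_mul_rpow_le a d hl₀ hl₁
        · exact hh.rpow_mul_rpow_le a d (by linarith) (by linarith)

theorem mul_setIntegral_Ioi_le (hh : LogConcaveFn h) (hi : Integrable h) {a b : ℝ}
    (hab : a ≤ b) : h a * ∫ t in Set.Ioi b, h t ≤ h b * ∫ t in Set.Ioi a, h t := by
  rw [← sub_sub_cancel b a, ← setIntegral_Ioi_comp_sub, sub_sub_cancel, ← integral_const_mul,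
    ← integral_const_mul]
  refine setIntegral_mono_on (hi.integrableOn.const_mul _)
    ((hi.comp_sub_right _).integrableOn.const_mul _) measurableSet_Ioi fun t ht => ?_
  exact hh.mul_le_mul_of_add_eq hab (le_of_lt ht) (by ring)

end LogConcaveFn

theorem logconcave_tail_estimate
    (h : ℝ → ℝ) (hlc : LogConcaveFn h)
    (hi : Integrable h) (h1 : ∫ x, h x = 1)
    (w : ℝ) (hw : ∫ x in Set.Iic w, h x = 1 / 2) (hwpos : 0 < h w)
    (x : ℝ) (hx : w < x) :
    ∫ t in Set.Ioi x, h t ≤ h x / (2 * h w) := by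
  have upper_half : ∫ t in Set.Ioi w, h t = 1 / 2 := by
    linarith [intervalIntegral.integral_Iic_add_Ioi (b := w) hi.integrableOn hi.integrableOn]
  have hazard := hlc.mul_setIntegral_Ioi_le hi hx.le
  rw [upper_half] at hazard
  rw [le_div_iff₀ (by positivity)]
  linarith
end

section
/- Let f, g be log-concave probability densities on ℝ with supports the open intervals I_f, I_g, and let T : I_f → I_g be the transportation map defined by ∫_{−∞}^{x} f = ∫_{−∞}^{T(x)} g. If m : ℝ → ℝ is non-negative integrable with m((r+s)/2) ≥ √(f(r)g(s)) for all r, s, and ∫ℝ m ≤ 1 + ε, then ∫_{I_f} f(x)·(1 − √(T'(x)))²/(2√(T'(x))) dx ≤ ε. -/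
open MeasureTheory

/-!
Put `θ x = (x + T x) / 2`, a strictly increasing map with `θ' = (1 + T') / 2`. Since
`f = (g ∘ T) T'`, the hypothesis on `m` gives `m (θ x) ≥ √(f x g (T x)) = f x / √(T' x)`, and the
elementary identity `(1 + t) / (2 √t) = 1 + (1 - √t)² / (2 √t)` turns this into
`θ'(x) m (θ x) ≥ f x + f x (1 - √(T' x))² / (2 √(T' x))`. Integrating over the support of `f` and
changing variables `y = θ x` on the left gives `1 + ε ≥ ∫ m ≥ 1 + ∫ f (1 - √T')² / (2 √T')`.
-/

open scoped ENNReal in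
theorem lintegral_abs_deriv_mul_comp_le {s : Set ℝ} {θ θ' : ℝ → ℝ} (hs : MeasurableSet s)
    (hθ' : ∀ x ∈ s, HasDerivWithinAt θ (θ' x) s x) (hθ : Set.InjOn θ s) (F : ℝ → ℝ≥0∞) :
    ∫⁻ x in s, ENNReal.ofReal |θ' x| * F (θ x) ≤ ∫⁻ y, F y := by
  rw [← lintegral_image_eq_lintegral_abs_deriv_mul hs hθ' hθ]
  exact setLIntegral_le_lintegral _ _

theorem integral_le_of_lintegral_ofReal_le {α : Type*} [MeasurableSpace α] {μ : Measure α}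
    {F : α → ℝ} {c : ℝ} (hc : 0 ≤ c) (hF : 0 ≤ᵐ[μ] F)
    (h : ∫⁻ x, ENNReal.ofReal (F x) ∂μ ≤ ENNReal.ofReal c) :
    ∫ x, F x ∂μ ≤ c := by
  by_cases hFi : Integrable F μ
  · rw [← ofReal_integral_eq_lintegral_ofReal hFi hF] at h
    exact (ENNReal.ofReal_le_ofReal_iff hc).1 h
  · rw [integral_undef hFi]
    exact hc

theorem exists_measurableSet_subset_ae_eq_forall {α : Type*} [MeasurableSpace α]
    {μ : Measure α} {S : Set α} {P : α → Prop} (hS : NullMeasurableSet S μ)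
    (hP : ∀ᵐ x ∂μ, x ∈ S → P x) :
    ∃ s ⊆ S, MeasurableSet s ∧ s =ᵐ[μ] S ∧ ∀ x ∈ s, P x := by
  have hSP : {x | x ∈ S ∧ P x} =ᵐ[μ] S := by
    filter_upwards [hP] with x hx
    exact propext ⟨And.left, fun hxS => ⟨hxS, hx hxS⟩⟩
  obtain ⟨s, hs_sub, hs, hs_eq⟩ := (hS.congr hSP.symm).exists_measurable_subset_ae_eq
  exact ⟨s, fun x hx => (hs_sub hx).1, hs, hs_eq.trans hSP, fun x hx => (hs_sub hx).2⟩

theorem add_mul_one_sub_sqrt_sq_div_le {a b t M : ℝ} (ha : 0 < a) (hb : 0 ≤ b)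
    (hab : a = b * t) (hM : √(a * b) ≤ M) :
    a + a * (1 - √t) ^ 2 / (2 * √t) ≤ (1 + t) / 2 * M := by
  have ht : 0 < t := pos_of_mul_pos_right (hab ▸ ha) hb
  have hst : 0 < √t := Real.sqrt_pos.2 ht
  have hsq : √t ^ 2 = t := Real.sq_sqrt ht.le
  have hgeom : √(a * b) = a / √t := by
    rw [show a * b = (a / √t) ^ 2 by rw [div_pow, hsq, hab]; field_simp]
    exact Real.sqrt_sq (by positivity)
  calc a + a * (1 - √t) ^ 2 / (2 * √t) = (1 + t) / 2 * (a / √t) := by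
        field_simp
        linear_combination hsq
    _ ≤ (1 + t) / 2 * M := by gcongr; exact hgeom ▸ hM

theorem setLIntegral_setOf_pos_ofReal {α : Type*} [MeasurableSpace α] {μ : Measure α}
    {f : α → ℝ} (hf0 : ∀ x, 0 ≤ f x) (hfi : Integrable f μ) :
    ∫⁻ x in {x | 0 < f x}, ENNReal.ofReal (f x) ∂μ = ENNReal.ofReal (∫ x, f x ∂μ) := by
  rw [setLIntegral_eq_of_support_subset (s := {x | 0 < f x}) fun x hx =>
      ENNReal.ofReal_pos.1 (pos_iff_ne_zero.2 hx),
    ofReal_integral_eq_lintegral_ofReal hfi (.of_forall hf0)]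

theorem lintegral_add_transport_deficit_le {f g m T T' : ℝ → ℝ} {s : Set ℝ}
    (hs : MeasurableSet s) (hf : ∀ x ∈ s, 0 < f x) (hg : ∀ y, 0 ≤ g y) (hTmono : MonotoneOn T s)
    (hT : ∀ x ∈ s, HasDerivAt T (T' x) x ∧ f x = g (T x) * T' x)
    (hm0 : ∀ x, 0 ≤ m x) (hmi : Integrable m)
    (hm : ∀ r s : ℝ, √(f r * g s) ≤ m ((r + s) / 2)) :
    ∫⁻ x in s, ENNReal.ofReal (f x) +
        ENNReal.ofReal (f x * (1 - √(T' x)) ^ 2 / (2 * √(T' x))) ≤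
      ENNReal.ofReal (∫ y, m y) := by
  have hθinj : Set.InjOn (fun x => (x + T x) / 2) s := by
    refine StrictMonoOn.injOn fun x hx y hy hxy => ?_
    have := hTmono hx hy hxy.le
    show (x + T x) / 2 < (y + T y) / 2
    linarith
  have hpoint : ∀ x ∈ s, ENNReal.ofReal (f x) +
      ENNReal.ofReal (f x * (1 - √(T' x)) ^ 2 / (2 * √(T' x))) ≤
      ENNReal.ofReal |(1 + T' x) / 2| * ENNReal.ofReal (m ((x + T x) / 2)) := by
    intro x hx
    have hfx := hf x hx
    have hle := add_mul_one_sub_sqrt_sq_div_le hfx (hg _) (hT x hx).2 (hm x (T x))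
    have hT' : 0 < T' x := pos_of_mul_pos_right ((hT x hx).2 ▸ hfx) (hg _)
    rw [← ENNReal.ofReal_add hfx.le (by positivity), ← ENNReal.ofReal_mul (abs_nonneg _),
      abs_of_pos (by positivity)]
    exact ENNReal.ofReal_le_ofReal hle
  calc _ ≤ ∫⁻ x in s, ENNReal.ofReal |(1 + T' x) / 2| * ENNReal.ofReal (m ((x + T x) / 2)) :=
        setLIntegral_mono' hs hpoint
    _ ≤ ∫⁻ y, ENNReal.ofReal (m y) :=
        lintegral_abs_deriv_mul_comp_le hs
          (fun x hx => (((hasDerivAt_id x).add (hT x hx).1).div_const 2).hasDerivWithinAt)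
          hθinj _
    _ = ENNReal.ofReal (∫ y, m y) := (ofReal_integral_eq_lintegral_ofReal hmi (.of_forall hm0)).symm

theorem stab_condition_general
    (f g m : ℝ → ℝ) (T T' : ℝ → ℝ) (ε : ℝ) (hε : 0 < ε)
    (hf : LogConcaveFn f) (hg : LogConcaveFn g)
    (hfi : Integrable f)
    (hf1 : ∫ x, f x = 1)
    (hTmono : MonotoneOn T {x : ℝ | 0 < f x})
    (hderiv : ∀ᵐ x, x ∈ {x : ℝ | 0 < f x} →
      HasDerivAt T (T' x) x ∧ f x = g (T x) * T' x)
    (hm0 : ∀ x, 0 ≤ m x) (hmi : Integrable m)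
    (hm : ∀ r s : ℝ, Real.sqrt (f r * g s) ≤ m ((r + s) / 2))
    (hmε : ∫ x, m x ≤ 1 + ε) :
    ∫ x in {x : ℝ | 0 < f x},
        f x * (1 - Real.sqrt (T' x)) ^ 2 / (2 * Real.sqrt (T' x)) ≤ ε := by
  have hS : NullMeasurableSet {x : ℝ | 0 < f x} :=
    nullMeasurableSet_lt aemeasurable_const hfi.aemeasurable
  obtain ⟨s, hsS, hs, hs_ae, hsT⟩ := exists_measurableSet_subset_ae_eq_forall hS hderiv
  have hmass : ∫⁻ x in s, ENNReal.ofReal (f x) = 1 := by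
    rw [setLIntegral_congr hs_ae, setLIntegral_setOf_pos_ofReal hf.1 hfi, hf1, ENNReal.ofReal_one]
  have hsum : 1 + ∫⁻ x in s, ENNReal.ofReal (f x * (1 - √(T' x)) ^ 2 / (2 * √(T' x))) ≤
      1 + ENNReal.ofReal ε := calc
    _ ≤ ∫⁻ x in s, ENNReal.ofReal (f x) +
          ENNReal.ofReal (f x * (1 - √(T' x)) ^ 2 / (2 * √(T' x))) :=
        hmass ▸ le_lintegral_add _ _
    _ ≤ ENNReal.ofReal (∫ y, m y) :=
        lintegral_add_transport_deficit_le hs hsS hg.1 (hTmono.mono hsS) hsT hm0 hmi hm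
    _ ≤ 1 + ENNReal.ofReal ε := by
        rw [← ENNReal.ofReal_one, ← ENNReal.ofReal_add zero_le_one hε.le]
        exact ENNReal.ofReal_le_ofReal hmε
  rw [← setIntegral_congr_set hs_ae]
  refine integral_le_of_lintegral_ofReal_le hε.le (.of_forall fun x => ?_)
    ((ENNReal.add_le_add_iff_left ENNReal.one_ne_top).1 hsum)
  have := hf.1 x
  positivity

theorem stab_condition
    (f g m : ℝ → ℝ) (T T' : ℝ → ℝ) (ε : ℝ) (hε : 0 < ε)
    (hf : LogConcaveFn f) (hg : LogConcaveFn g)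
    (hfi : Integrable f) (hgi : Integrable g)
    (hf1 : ∫ x, f x = 1) (hg1 : ∫ x, g x = 1)
    (hT : ∀ x ∈ {x : ℝ | 0 < f x}, ∫ t in Set.Iic x, f t = ∫ t in Set.Iic (T x), g t)
    (hTmono : MonotoneOn T {x : ℝ | 0 < f x})
    (hTcont : ContinuousOn T {x : ℝ | 0 < f x})
    (hTbij : Set.BijOn T {x : ℝ | 0 < f x} {y : ℝ | 0 < g y})
    (hderiv : ∀ᵐ x, x ∈ {x : ℝ | 0 < f x} →
      HasDerivAt T (T' x) x ∧ f x = g (T x) * T' x)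
    (hm0 : ∀ x, 0 ≤ m x) (hmi : Integrable m)
    (hm : ∀ r s : ℝ, Real.sqrt (f r * g s) ≤ m ((r + s) / 2))
    (hmε : ∫ x, m x ≤ 1 + ε) :
    ∫ x in {x : ℝ | 0 < f x},
        f x * (1 - Real.sqrt (T' x)) ^ 2 / (2 * Real.sqrt (T' x)) ≤ ε :=
  stab_condition_general f g m T T' ε hε hf hg hfi hf1 hTmono hderiv hm0 hmi hm hmε
end

section
/- Let α, β ∈ (0,1) with α + β = 1. For any t > 0, (α + β t)/t^β ≥ 1 + min{α, β}·(1 − t)²/(t^β·(1 + √t)²). -/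
theorem koebe_estimate (α β : ℝ) (hα : 0 < α) (hα1 : α < 1) (hβ : 0 < β) (hβ1 : β < 1)
    (hαβ : α + β = 1) (t : ℝ) (ht : 0 < t) :
    1 + min α β * (1 - t) ^ 2 / (t ^ β * (1 + Real.sqrt t) ^ 2) ≤ (α + β * t) / t ^ β := by
  set s := Real.sqrt t with hsdef
  have hs : 0 < s := Real.sqrt_pos.mpr ht
  have hs2 : s ^ 2 = t := Real.sq_sqrt ht.le
  have htb : (0:ℝ) < t ^ β := Real.rpow_pos_of_pos ht β
  have hst : s ^ (2*β) = t ^ β := by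
    rw [← hs2, ← Real.rpow_natCast s 2, ← Real.rpow_mul hs.le]
    norm_num [mul_comm]
  have key : t ^ β + min α β * (1 - s) ^ 2 ≤ α + β * t := by
    rcases le_total α β with h | h
    · rw [min_eq_left h]
      have hgm := Real.geom_mean_le_arith_mean2_weighted
        (by linarith : (0:ℝ) ≤ β - α) (by linarith : (0:ℝ) ≤ 2*α)
        (sq_nonneg s) hs.le (by linarith)
      have heq : (s^2 : ℝ) ^ (β - α) * s ^ (2*α) = t ^ β := by
        rw [← hst, ← Real.rpow_natCast s 2, ← Real.rpow_mul hs.le, ← Real.rpow_add hs]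
        norm_num
        ring_nf
      rw [heq] at hgm
      nlinarith [hgm, hs2]
    · rw [min_eq_right h]
      have hgm := Real.geom_mean_le_arith_mean2_weighted
        (by linarith : (0:ℝ) ≤ α - β) (by linarith : (0:ℝ) ≤ 2*β)
        (zero_le_one) hs.le (by linarith)
      rw [Real.one_rpow, one_mul, hst] at hgm
      nlinarith [hgm, hs2]
  have h1 : min α β * (1 - t) ^ 2 / (t ^ β * (1 + s) ^ 2) = min α β * (1 - s) ^ 2 / t ^ β := by
    rw [show (1 - t)^2 = (1 - s)^2 * (1 + s)^2 by rw [← hs2]; ring]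
    rw [div_eq_div_iff (by positivity) htb.ne']
    ring
  rw [h1, le_div_iff₀ htb]
  have h2 : (1 + min α β * (1 - s) ^ 2 / t ^ β) * t ^ β = t ^ β + min α β * (1 - s) ^ 2 := by
    field_simp
  rw [h2]
  exact key
end
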